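/- Let 0 ≤ δ ≤ 1 be a real constant. Let P, Q be affine points of E(ℚ) with X^{1/6} ≤ x(P) < x(Q), and suppose x(P) = x₁/s and x(Q) = x₂/s where x₁, x₂ are integers, s is a positive integer, gcd(x₁, s) ≤ s^δ and gcd(x₂, s) ≤ s^δ. Then P + Q is an affine point and h(P+Q) ≤ h(P) + 2·h(Q) + 3δ·log s + 2.9. -/

import Mathlib

open scoped TensorProduct

noncomputable section

/-- The logarithmic Weil height of a rational number:
`h(p/q) = log max (|p|, q)` for `p/q` in lowest terms. -/
def qh (q : ℚ) : ℝ := Real.log (max (|q.num| : ℝ) (q.den : ℝ))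

/-- The short Weierstrass curve `y² = x³ + Ax + B` over `ℚ`. -/
def Ecurve (A B : ℤ) : WeierstrassCurve.Affine ℚ :=
  { a₁ := 0, a₂ := 0, a₃ := 0, a₄ := (A : ℚ), a₆ := (B : ℚ) }

/-- `X = max (|A|³, |B|²)` as a real number. -/
def Xval (A B : ℤ) : ℝ := max (|(A : ℝ)| ^ 3) (|(B : ℝ)| ^ 2)

/-- The x-coordinate of an affine point (with junk value `0` at the point at infinity). -/
def xCoord {W : WeierstrassCurve.Affine ℚ} : W.Point → ℚ
  | .zero => 0
  | @WeierstrassCurve.Affine.Point.some _ _ _ x _ _ => x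

/-- `hh : W.Point → ℝ` is a canonical height for `W`: it vanishes on points of finite
order, and for every point `P` of infinite order, `h(x(2ⁿ P)) / 4ⁿ → hh P`. -/
def IsCanonicalHeight (W : WeierstrassCurve.Affine ℚ) (hh : W.Point → ℝ) : Prop :=
  (∀ P : W.Point, IsOfFinAddOrder P → hh P = 0) ∧
  (∀ P : W.Point, ¬ IsOfFinAddOrder P →
    Filter.Tendsto (fun n : ℕ => qh (xCoord ((2 ^ n : ℕ) • P)) / 4 ^ n)
      Filter.atTop (nhds (hh P)))

/-- `cos θ_{P,Q} = (ĥ(P+Q) − ĥ(P) − ĥ(Q)) / (2 √(ĥ(P) ĥ(Q)))`. -/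
def cosAngle {W : WeierstrassCurve.Affine ℚ} (hh : W.Point → ℝ) (P Q : W.Point) : ℝ :=
  (hh (P + Q) - hh P - hh Q) / (2 * Real.sqrt (hh P * hh Q))

/-- The rank `dim_ℚ (ℚ ⊗_ℤ G)` of an abelian group `G`. -/
def rankQ (G : Type*) [AddCommGroup G] : ℕ :=
  Module.finrank ℚ (ℚ ⊗[ℤ] G)

end

/-!
Write `x(P) = x₁/s`, `x(Q) = x₂/s`. The chord construction gives
`x(P+Q) · (x(Q) - x(P))² = x(P) x(Q) (x(P) + x(Q)) + A (x(P) + x(Q)) + 2B - 2 y(P) y(Q)`,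
and multiplying by `s³` writes `x(P+Q) = N / D` with `D = s (x₂ - x₁)²` and `N` an integer, because
`(s³ y(P) y(Q))²` is a product of the integers `s³ y(P)²` and `s³ y(Q)²`. The hypothesis
`x(P) ≥ X^{1/6}` gives `x(P) ≥ 1`, `|A| ≤ x(P)²` and `|B| ≤ x(P)³`, whence `|N|, D ≤ 12 x₁ x₂²`.
Finally `log xᵢ ≤ h(xᵢ/s) + log gcd(xᵢ, s) ≤ h(xᵢ/s) + δ log s` and `log 12 < 2.9`.
-/

open WeierstrassCurve.Affine

lemma abs_addX_numerator_le {K : Type*} [CommRing K] [LinearOrder K] [IsStrictOrderedRing K]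
    {a b u v p q : K} (hu : 0 ≤ u) (huv : u ≤ v) (ha : |a| ≤ u ^ 2) (hb : |b| ≤ u ^ 3)
    (hp : p ^ 2 = u ^ 3 + a * u + b) (hq : q ^ 2 = v ^ 3 + a * v + b) :
    |u * v * (u + v) + a * (u + v) + 2 * b - 2 * p * q| ≤ 12 * u * v ^ 2 := by
  obtain ⟨ha₁, ha₂⟩ := abs_le.mp ha
  obtain ⟨hb₁, hb₂⟩ := abs_le.mp hb
  have hv : 0 ≤ v := hu.trans huv
  have huv₃ : u ^ 3 ≤ u * v ^ 2 := by nlinarith [mul_le_mul huv huv hu hv]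
  have hp₂ : p ^ 2 ≤ 3 * u ^ 3 := by nlinarith
  have hq₂ : q ^ 2 ≤ 3 * v ^ 3 := by
    nlinarith [pow_le_pow_left₀ hu huv 3, mul_le_mul_of_nonneg_right ha₂ hv,
      mul_le_mul_of_nonneg_right (pow_le_pow_left₀ hu huv 2) hv]
  have hpq : |p * q| ≤ 3 * u * v ^ 2 := by
    refine abs_le_of_sq_le_sq ?_ (by positivity)
    calc (p * q) ^ 2 = p ^ 2 * q ^ 2 := by ring
      _ ≤ (3 * u ^ 3) * (3 * v ^ 3) := mul_le_mul hp₂ hq₂ (sq_nonneg _) (by positivity)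
      _ ≤ (3 * u * v ^ 2) ^ 2 := by nlinarith [mul_nonneg (mul_nonneg hu hu) (pow_nonneg hv 3)]
  obtain ⟨hpq₁, hpq₂⟩ := abs_le.mp hpq
  rw [abs_le]
  constructor <;> nlinarith [mul_nonneg hu hv, mul_le_mul_of_nonneg_left huv (mul_nonneg hu hv)]

lemma exists_intCast_eq_of_sq_eq_intCast {t : ℚ} {m : ℤ} (h : t ^ 2 = m) : ∃ n : ℤ, n = t := by
  have hden : t.den ^ 2 = 1 := by rw [← Rat.den_pow, h, Rat.den_intCast]
  exact ⟨t.num, (Rat.den_eq_one_iff t).mp (by simpa using hden)⟩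

lemma qh_le_log_of_eq_div {r : ℚ} {N D M : ℤ} (hr : r = N / D) (hD : 0 < D) (hN : |N| ≤ M)
    (hDM : D ≤ M) : qh r ≤ Real.log M := by
  rw [← Rat.divInt_eq_div] at hr
  have hnum : |r.num| ≤ |N| := by
    rcases eq_or_ne N 0 with rfl | hN0
    · simp [hr]
    · exact Int.le_of_dvd (abs_pos.mpr hN0) ((abs_dvd_abs _ _).mpr (hr ▸ Rat.num_dvd N hD.ne'))
  have hden : (r.den : ℤ) ≤ D := Int.le_of_dvd hD (hr ▸ Rat.den_dvd N D)
  have hden_pos : (0 : ℝ) < r.den := by exact_mod_cast r.pos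
  refine Real.log_le_log (lt_max_of_lt_right hden_pos) (max_le ?_ ?_)
  · exact_mod_cast hnum.trans hN
  · exact_mod_cast hden.trans hDM

lemma log_le_qh_add_log_gcd (x : ℤ) {s : ℤ} (hs : 0 < s) :
    Real.log x ≤ qh (x / s) + Real.log (Int.gcd x s) := by
  rcases eq_or_ne x 0 with rfl | hx
  · simpa [qh] using Real.log_nonneg (by exact_mod_cast hs : (1 : ℝ) ≤ s)
  set r : ℚ := x / s
  obtain ⟨c, hxc, hsc⟩ := Rat.num_den_mk (q := r) hs.ne' (Rat.divInt_eq_div x s).symm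
  have hc : 0 < c := pos_of_mul_pos_left (hsc ▸ hs) (by positivity)
  have hnum : r.num ≠ 0 := fun h => hx (by simpa [h] using hxc)
  have hcg : c ≤ Int.gcd x s :=
    Int.le_of_dvd (by exact_mod_cast Int.gcd_pos_of_ne_zero_right x hs.ne')
      (Int.dvd_coe_gcd ⟨_, hxc⟩ ⟨_, hsc⟩)
  have hnum_le : Real.log r.num ≤ qh r := by
    rw [← Real.log_abs]
    exact Real.log_le_log (by positivity) (le_max_of_le_left (by exact_mod_cast le_rfl))
  have hc_le : Real.log c ≤ Real.log (Int.gcd x s) :=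
    Real.log_le_log (by exact_mod_cast hc) (by exact_mod_cast hcg)
  have hlog : Real.log x = Real.log c + Real.log r.num := by
    rw [hxc, Int.cast_mul, Real.log_mul (by exact_mod_cast hc.ne') (by exact_mod_cast hnum)]
  linarith

lemma log_gcd_le_mul_log {x s : ℤ} {δ : ℝ} (hs : 0 < s) (hg : (Int.gcd x s : ℝ) ≤ (s : ℝ) ^ δ) :
    Real.log (Int.gcd x s) ≤ δ * Real.log s := by
  have hgcd : (0 : ℝ) < Int.gcd x s := by exact_mod_cast Int.gcd_pos_of_ne_zero_right x hs.ne'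
  rw [← Real.log_rpow (by exact_mod_cast hs)]
  exact Real.log_le_log hgcd hg

lemma log_twelve_le : Real.log 12 ≤ 2.9 := by
  calc Real.log 12 ≤ Real.log (2 ^ 4) := Real.log_le_log (by norm_num) (by norm_num)
    _ = 4 * Real.log 2 := by rw [Real.log_pow]; norm_num
    _ ≤ 2.9 := by linarith [Real.log_two_lt_d9]

lemma one_le_Xval {A B : ℤ} (hAB : 4 * A ^ 3 + 27 * B ^ 2 ≠ 0) : 1 ≤ Xval A B := by
  rcases eq_or_ne A 0 with rfl | hA
  · have hB : (1 : ℝ) ≤ |(B : ℝ)| := by exact_mod_cast Int.one_le_abs (by simpa using hAB)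
    exact le_max_of_le_right (one_le_pow₀ hB)
  · have hA : (1 : ℝ) ≤ |(A : ℝ)| := by exact_mod_cast Int.one_le_abs hA
    exact le_max_of_le_left (one_le_pow₀ hA)

lemma Xval_le_of_rpow_le {A B : ℤ} {u : ℝ} (h : Xval A B ^ ((1 : ℝ) / 6) ≤ u) :
    0 ≤ u ∧ Xval A B ≤ u ^ 6 := by
  have hX : 0 ≤ Xval A B := le_max_of_le_left (by positivity)
  have hu : 0 ≤ u := (Real.rpow_nonneg hX _).trans h
  rw [one_div, Real.rpow_inv_le_iff_of_pos hX hu (by norm_num)] at h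
  exact ⟨hu, by exact_mod_cast h⟩

lemma coeff_bounds_of_Xval_le {A B : ℤ} {u : ℝ} (hu : 0 ≤ u) (h : Xval A B ≤ u ^ 6) :
    |(A : ℝ)| ≤ u ^ 2 ∧ |(B : ℝ)| ≤ u ^ 3 := by
  constructor
  · rw [← pow_le_pow_iff_left₀ (abs_nonneg _) (by positivity) (by norm_num : 3 ≠ 0), ← pow_mul]
    exact (le_max_left _ _).trans h
  · rw [← pow_le_pow_iff_left₀ (abs_nonneg _) (by positivity) (by norm_num : 2 ≠ 0), ← pow_mul]
    exact (le_max_right _ _).trans h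

@[simp] lemma xCoord_some {W : WeierstrassCurve.Affine ℚ} {x y : ℚ} (h : W.Nonsingular x y) :
    xCoord (.some x y h) = x := rfl

lemma Ecurve_equation_iff {A B : ℤ} {x y : ℚ} :
    (Ecurve A B).Equation x y ↔ y ^ 2 = x ^ 3 + A * x + B := by
  simp [equation_iff, Ecurve]

lemma xCoord_some_add_some_mul_sq {A B : ℤ} {x₁ y₁ x₂ y₂ : ℚ}
    (h₁ : (Ecurve A B).Nonsingular x₁ y₁) (h₂ : (Ecurve A B).Nonsingular x₂ y₂) (hx : x₁ ≠ x₂) :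
    xCoord (.some x₁ y₁ h₁ + .some x₂ y₂ h₂) * (x₂ - x₁) ^ 2 =
      x₁ * x₂ * (x₁ + x₂) + A * (x₁ + x₂) + 2 * B - 2 * y₁ * y₂ := by
  have hy₁ := Ecurve_equation_iff.mp h₁.1
  have hy₂ := Ecurve_equation_iff.mp h₂.1
  rw [Point.add_of_X_ne hx, xCoord_some,
    slope_of_X_ne hx]
  have hℓ : ((y₁ - y₂) / (x₁ - x₂)) ^ 2 * (x₂ - x₁) ^ 2 = (y₁ - y₂) ^ 2 := by
    rw [← neg_sub x₁ x₂, neg_sq, div_pow, div_mul_cancel₀ _ (pow_ne_zero 2 (sub_ne_zero.mpr hx))]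
  simp only [addX, Ecurve]
  linear_combination hℓ + hy₁ + hy₂

lemma qh_addX_le {A B x₁ x₂ s : ℤ} (hs : 0 < s) {u v y₁ y₂ w : ℚ}
    (hu : u = x₁ / s) (hv : v = x₂ / s) (hu1 : 1 ≤ u) (huv : u < v)
    (hA : |(A : ℚ)| ≤ u ^ 2) (hB : |(B : ℚ)| ≤ u ^ 3)
    (hy₁ : y₁ ^ 2 = u ^ 3 + A * u + B) (hy₂ : y₂ ^ 2 = v ^ 3 + A * v + B)
    (hw : w * (v - u) ^ 2 = u * v * (u + v) + A * (u + v) + 2 * B - 2 * y₁ * y₂) :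
    qh w ≤ Real.log 12 + Real.log x₁ + 2 * Real.log x₂ := by
  have hsQ : (0 : ℚ) < s := by exact_mod_cast hs
  have hx₁ : 0 < x₁ := by
    have : (0 : ℚ) < x₁ / s := hu ▸ one_pos.trans_le hu1
    exact_mod_cast (div_pos_iff_of_pos_right hsQ).mp this
  have hx₁₂ : x₁ < x₂ := by
    rw [hu, hv, div_lt_div_iff_of_pos_right hsQ] at huv
    exact_mod_cast huv
  obtain ⟨t, ht⟩ : ∃ t : ℤ, t = s ^ 3 * y₁ * y₂ := by
    refine exists_intCast_eq_of_sq_eq_intCast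
      (m := (x₁ ^ 3 + A * x₁ * s ^ 2 + B * s ^ 3) * (x₂ ^ 3 + A * x₂ * s ^ 2 + B * s ^ 3)) ?_
    calc ((s : ℚ) ^ 3 * y₁ * y₂) ^ 2 = (s ^ 3 * y₁ ^ 2) * (s ^ 3 * y₂ ^ 2) := by ring
      _ = _ := by rw [hy₁, hy₂, hu, hv]; push_cast; field_simp
  set N : ℤ := x₁ * x₂ * (x₁ + x₂) + A * s ^ 2 * (x₁ + x₂) + 2 * B * s ^ 3 - 2 * t
  set D : ℤ := s * (x₂ - x₁) ^ 2
  set M : ℤ := 12 * x₁ * x₂ ^ 2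
  have hN : (N : ℚ) = s ^ 3 * (u * v * (u + v) + A * (u + v) + 2 * B - 2 * y₁ * y₂) := by
    simp only [N]; push_cast; rw [ht, hu, hv]; field_simp
  have hD : (D : ℚ) = s ^ 3 * (v - u) ^ 2 := by
    simp only [D]; push_cast; rw [hu, hv]; field_simp
  have hM : (M : ℚ) = s ^ 3 * (12 * u * v ^ 2) := by
    simp only [M]; push_cast; rw [hu, hv]; field_simp
  have hDpos : 0 < D := mul_pos hs (pow_pos (sub_pos.mpr hx₁₂) 2)
  have hwND : w = N / D := by
    rw [eq_div_iff (by exact_mod_cast hDpos.ne'), hN, hD, ← hw]; ring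
  have hNM : |N| ≤ M := by
    have : |(N : ℚ)| ≤ M := by
      rw [hN, hM, abs_mul, abs_of_pos (by positivity)]
      exact mul_le_mul_of_nonneg_left
        (abs_addX_numerator_le (by linarith) huv.le hA hB hy₁ hy₂) (by positivity)
    exact_mod_cast this
  have hDM : D ≤ M := by
    have : (D : ℚ) ≤ M := by
      rw [hD, hM]
      refine mul_le_mul_of_nonneg_left ?_ (by positivity)
      nlinarith [mul_le_mul_of_nonneg_right hu1 (sq_nonneg v)]
    exact_mod_cast this
  calc qh w ≤ Real.log M := qh_le_log_of_eq_div hwND hDpos hNM hDM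
    _ = Real.log 12 + Real.log x₁ + 2 * Real.log x₂ := by
      have hx₂ : (0 : ℝ) < x₂ := by exact_mod_cast hx₁.trans hx₁₂
      simp only [M]; push_cast
      rw [Real.log_mul (by positivity) (by positivity), Real.log_mul (by norm_num) (by positivity),
        Real.log_pow, Nat.cast_ofNat]

theorem statement2_general (δ : ℝ)
    (A B : ℤ) (hAB : 4 * A ^ 3 + 27 * B ^ 2 ≠ 0)
    (P Q : (Ecurve A B).Point) (hP : P ≠ 0) (hQ : Q ≠ 0)
    (hXP : Xval A B ^ ((1 : ℝ) / 6) ≤ ((xCoord P : ℚ) : ℝ))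
    (hPQ : xCoord P < xCoord Q)
    (x₁ x₂ s : ℤ) (hs : 0 < s)
    (hx₁ : xCoord P = (x₁ : ℚ) / (s : ℚ)) (hx₂ : xCoord Q = (x₂ : ℚ) / (s : ℚ))
    (hg₁ : (Int.gcd x₁ s : ℝ) ≤ (s : ℝ) ^ δ) (hg₂ : (Int.gcd x₂ s : ℝ) ≤ (s : ℝ) ^ δ) :
    P + Q ≠ 0 ∧
    qh (xCoord (P + Q)) ≤ qh (xCoord P) + 2 * qh (xCoord Q) + 3 * δ * Real.log s + 2.9 := by
  obtain _ | @⟨u, y₁, h₁⟩ := P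
  · exact absurd rfl hP
  obtain _ | @⟨v, y₂, h₂⟩ := Q
  · exact absurd rfl hQ
  simp only [xCoord_some] at hXP hPQ hx₁ hx₂ ⊢
  refine ⟨?_, ?_⟩
  · rw [Point.add_of_X_ne hPQ.ne]
    exact Point.some_ne_zero _
  obtain ⟨hu0, hu6⟩ := Xval_le_of_rpow_le hXP
  have hu1 : (1 : ℝ) ≤ u :=
    (one_le_pow_iff_of_nonneg hu0 (by norm_num)).mp ((one_le_Xval hAB).trans hu6)
  obtain ⟨hA, hB⟩ := coeff_bounds_of_Xval_le hu0 hu6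
  have hsum := qh_addX_le hs hx₁ hx₂ (by exact_mod_cast hu1) hPQ
    (by exact_mod_cast hA) (by exact_mod_cast hB) (Ecurve_equation_iff.mp h₁.1)
    (Ecurve_equation_iff.mp h₂.1) (xCoord_some_add_some_mul_sq h₁ h₂ hPQ.ne)
  have hlog₁ := log_le_qh_add_log_gcd x₁ hs
  have hlog₂ := log_le_qh_add_log_gcd x₂ hs
  rw [← hx₁] at hlog₁
  rw [← hx₂] at hlog₂
  linarith [log_gcd_le_mul_log hs hg₁, log_gcd_le_mul_log hs hg₂, log_twelve_le]

theorem statement2 (δ : ℝ) (hδ0 : 0 ≤ δ) (hδ1 : δ ≤ 1)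
    (A B : ℤ) (hAB : 4 * A ^ 3 + 27 * B ^ 2 ≠ 0)
    (P Q : (Ecurve A B).Point) (hP : P ≠ 0) (hQ : Q ≠ 0)
    (hXP : Xval A B ^ ((1 : ℝ) / 6) ≤ ((xCoord P : ℚ) : ℝ))
    (hPQ : xCoord P < xCoord Q)
    (x₁ x₂ s : ℤ) (hs : 0 < s)
    (hx₁ : xCoord P = (x₁ : ℚ) / (s : ℚ)) (hx₂ : xCoord Q = (x₂ : ℚ) / (s : ℚ))
    (hg₁ : (Int.gcd x₁ s : ℝ) ≤ (s : ℝ) ^ δ) (hg₂ : (Int.gcd x₂ s : ℝ) ≤ (s : ℝ) ^ δ) :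
    P + Q ≠ 0 ∧
    qh (xCoord (P + Q)) ≤ qh (xCoord P) + 2 * qh (xCoord Q) + 3 * δ * Real.log s + 2.9 :=
  statement2_general δ A B hAB P Q hP hQ hXP hPQ x₁ x₂ s hs hx₁ hx₂ hg₁ hg₂
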